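/- Let ω = e^{-φ} be a regular weight in the class 𝒲 and let φ₀ be an analytic self-map of the unit disk 𝔻. If ζ ∈ ∂𝔻 satisfies d_{φ₀}(ζ) > 1 (including d_{φ₀}(ζ) = ∞), then lim_{z→ζ} ω(z)/ω(φ₀(z)) = 0. -/

import Mathlib

open MeasureTheory Filter Set Topology ComplexConjugate
open scoped ENNReal NNReal

noncomputable section

/-- The open unit disk in `ℂ`. -/
def UD : Set ℂ := Metric.ball 0 1

/-- The normalized area measure on `ℂ` (planar Lebesgue measure divided by `π`),
so that `UD` has measure `1`. -/
def dA : Measure ℂ := (ENNReal.ofReal (1 / Real.pi)) • (volume : Measure ℂ)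

/-- The Laplacian of a function `f : ℂ → ℝ`, as the sum of the second derivatives in the
horizontal and the vertical direction. -/
def lap (f : ℂ → ℝ) (z : ℂ) : ℝ :=
  iteratedDeriv 2 (fun t : ℝ => f (z + (t : ℂ))) 0 +
    iteratedDeriv 2 (fun t : ℝ => f (z + (t : ℂ) * Complex.I)) 0

/-- `τ = (Δφ)^{-1/2}`. -/
def tauOf (φ : ℂ → ℝ) (z : ℂ) : ℝ := (lap φ z) ^ (-(1 / 2) : ℝ)

/-- The radial profile of `τ`. -/
def tauR (φ : ℂ → ℝ) (r : ℝ) : ℝ := tauOf φ ((r : ℂ))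

/-- The weight `ω = e^{-φ}`. -/
def wt (φ : ℂ → ℝ) (z : ℂ) : ℝ := Real.exp (-φ z)

/-- The radial profile of the weight `ω = e^{-φ}`. -/
def wtR (φ : ℂ → ℝ) (r : ℝ) : ℝ := wt φ ((r : ℂ))

/-- The filter of approach to the boundary of the disk: `|z| → 1⁻`. -/
def toBdry : Filter ℂ := Filter.comap (fun z : ℂ => ‖z‖) (nhdsWithin 1 (Set.Iio 1))

/-- The class `𝒲` of exponential type weights `ω = e^{-φ}`. -/
structure IsWeightW (φ : ℂ → ℝ) : Prop where
  smooth : ContDiffOn ℝ 2 φ UD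
  radial : ∀ z ∈ UD, φ z = φ ((‖z‖ : ℂ))
  lap_lb : ∃ c : ℝ, 0 < c ∧ ∀ z ∈ UD, c ≤ lap φ z
  tau_decr : ∀ r s : ℝ, 0 ≤ r → r ≤ s → s < 1 → tauR φ s ≤ tauR φ r
  tau_to_zero : Tendsto (tauR φ) (nhdsWithin 1 (Set.Iio 1)) (nhds 0)
  tau_deriv_to_zero : Tendsto (deriv (tauR φ)) (nhdsWithin 1 (Set.Iio 1)) (nhds 0)
  extra : (∃ c : ℝ, 0 < c ∧
      MonotoneOn (fun r : ℝ => tauR φ r * (1 - r) ^ (-c)) (Set.Ico (0 : ℝ) 1)) ∨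
    Tendsto (fun r : ℝ => deriv (tauR φ) r * Real.log (1 / tauR φ r))
      (nhdsWithin 1 (Set.Iio 1)) (nhds 0)

/-- A weight `ω = e^{-φ}` is regular: `ω(1-δt)/ω(1-t) → 0` as `t → 0⁺`, for every `0<δ<1`. -/
def IsRegularWt (φ : ℂ → ℝ) : Prop :=
  ∀ δ : ℝ, 0 < δ → δ < 1 →
    Tendsto (fun t : ℝ => wtR φ (1 - δ * t) / wtR φ (1 - t))
      (nhdsWithin 0 (Set.Ioi 0)) (nhds 0)

/-- An analytic self-map of the unit disk. -/
def IsSelfMapD (φ₀ : ℂ → ℂ) : Prop :=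
  DifferentiableOn ℂ φ₀ UD ∧ Set.MapsTo φ₀ UD UD

/-- `∫_𝔻 |f|^p ω dA` as a lower integral. -/
def apInt (p : ℝ) (φ : ℂ → ℝ) (f : ℂ → ℂ) : ℝ≥0∞ :=
  ∫⁻ z in UD, ENNReal.ofReal (‖f z‖ ^ p * wt φ z) ∂dA

/-- Membership in the weighted Bergman space `A^p(ω)`, `ω = e^{-φ}`. -/
def MemAp (p : ℝ) (φ : ℂ → ℝ) (f : ℂ → ℂ) : Prop :=
  DifferentiableOn ℂ f UD ∧ apInt p φ f < ⊤

/-- Boundedness of the composition operator `C_{φ₀}` on `A^p(ω)`. -/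
def CompBoundedAp (p : ℝ) (φ : ℂ → ℝ) (φ₀ : ℂ → ℂ) : Prop :=
  ∃ C : ℝ, 0 < C ∧ ∀ f : ℂ → ℂ, DifferentiableOn ℂ f UD →
    apInt p φ (f ∘ φ₀) ≤ ENNReal.ofReal C * apInt p φ f

/-- Boundedness of the weighted composition operator `uC_{φ₀}` on `A²(ω)`. -/
def WCompBounded (φ : ℂ → ℝ) (u φ₀ : ℂ → ℂ) : Prop :=
  ∃ C : ℝ, 0 < C ∧ ∀ f : ℂ → ℂ, DifferentiableOn ℂ f UD →
    apInt 2 φ (fun z => u z * f (φ₀ z)) ≤ ENNReal.ofReal C * apInt 2 φ f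

/-- The angular-derivative type quantity `d_{φ₀}(ζ) = liminf_{z→ζ} (1-|φ₀ z|)/(1-|z|)`. -/
def angD (φ₀ : ℂ → ℂ) (ζ : ℂ) : ℝ≥0∞ :=
  Filter.liminf
    (fun z => ENNReal.ofReal ((1 - ‖φ₀ z‖) / (1 - ‖z‖)))
    (nhdsWithin ζ UD)

/-- `K` is the reproducing kernel of `A²(ω)`: `K z` is the kernel function `K_z`. -/
structure IsBergmanKernel (φ : ℂ → ℝ) (K : ℂ → ℂ → ℂ) : Prop where
  mem : ∀ z ∈ UD, MemAp 2 φ (K z)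
  herm : ∀ z ∈ UD, ∀ w ∈ UD, K z w = conj (K w z)
  pos : ∀ z ∈ UD, 0 < (K z z).re
  reproducing : ∀ f : ℂ → ℂ, MemAp 2 φ f → ∀ z ∈ UD,
    f z = ∫ ξ in UD, f ξ * conj (K z ξ) * ((wt φ ξ : ℂ)) ∂dA

/-- The normalized reproducing kernel `k_z = K_z/‖K_z‖`, using `‖K_z‖² = K(z,z)`. -/
def normKer (φ : ℂ → ℝ) (K : ℂ → ℂ → ℂ) (z ξ : ℂ) : ℂ :=
  K z ξ / ((Real.sqrt ((K z z).re) : ℂ))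

/-- The Berezin transform `μ̃(z) = ∫ |k_z|² ω dμ` of a measure `μ`. -/
def berezinM (φ : ℂ → ℝ) (K : ℂ → ℂ → ℂ) (μ : Measure ℂ) (z : ℂ) : ℝ≥0∞ :=
  ∫⁻ ξ, ENNReal.ofReal (‖normKer φ K z ξ‖ ^ 2 * wt φ ξ) ∂μ

/-- The `φ₀`-Berezin transform of `|u|²`:
`B_{φ₀}(|u|²)(z) = ∫_𝔻 |k_z(φ₀ ξ)|² |u ξ|² ω(ξ) dA(ξ)`. -/
def berezinPhi (φ : ℂ → ℝ) (K : ℂ → ℂ → ℂ) (φ₀ u : ℂ → ℂ) (z : ℂ) : ℝ≥0∞ :=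
  ∫⁻ ξ in UD, ENNReal.ofReal
    (‖normKer φ K z (φ₀ ξ)‖ ^ 2 * ‖u ξ‖ ^ 2 * wt φ ξ) ∂dA

/-- `m_τ = min(1, C₁⁻¹, C₂⁻¹)/4`. -/
def mtau (C₁ C₂ : ℝ) : ℝ := min 1 (min C₁⁻¹ C₂⁻¹) / 4

/-- The properties `(L)` of the function `τ`, with constants `C₁, C₂`. -/
structure PropL (τ : ℂ → ℝ) (C₁ C₂ : ℝ) : Prop where
  pos : ∀ z ∈ UD, 0 < τ z
  bound : ∀ z ∈ UD, τ z ≤ C₁ * (1 - ‖z‖)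
  lip : ∀ z ∈ UD, ∀ ξ ∈ UD, |τ z - τ ξ| ≤ C₂ * ‖z - ξ‖

/-- A `δ`-sequence (as in the covering lemma of Oleinik). -/
def IsDeltaSeq (τ : ℂ → ℝ) (δ : ℝ) (a : ℕ → ℂ) : Prop :=
  (∀ k, a k ∈ UD) ∧
  (∀ j k : ℕ, j ≠ k → a j ∉ Metric.ball (a k) (δ * τ (a k))) ∧
  (⋃ k, Metric.ball (a k) (δ * τ (a k))) = UD

/-- The averaging function `μ̂_δ(z) = μ(D(δτ(z)))/|D(δτ(z))|` (normalized area). -/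
def avgM (τ : ℂ → ℝ) (μ : Measure ℂ) (δ : ℝ) (z : ℂ) : ℝ≥0∞ :=
  μ (Metric.ball z (δ * τ z)) / ENNReal.ofReal ((δ * τ z) ^ 2)

/-- `μ` is a Carleson measure for `A^p(ω)`: the embedding `A^p(ω) ⊆ L^p(ω dμ)` is bounded. -/
def IsCarleson (p : ℝ) (φ : ℂ → ℝ) (μ : Measure ℂ) : Prop :=
  ∃ C : ℝ, 0 < C ∧ ∀ f : ℂ → ℂ, DifferentiableOn ℂ f UD →
    (∫⁻ z, ENNReal.ofReal (‖f z‖ ^ p * wt φ z) ∂μ) ≤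
      ENNReal.ofReal C * apInt p φ f

/-- The embedding `A^p(ω) → L^p(ω dμ)` is compact: from any bounded sequence of
holomorphic functions one can extract a subsequence which is Cauchy in `L^p(ω dμ)`. -/
def IsCompactCarleson (p : ℝ) (φ : ℂ → ℝ) (μ : Measure ℂ) : Prop :=
  ∀ f : ℕ → ℂ → ℂ, (∀ n, DifferentiableOn ℂ (f n) UD) → (∀ n, apInt p φ (f n) ≤ 1) →
    ∃ σ : ℕ → ℕ, StrictMono σ ∧ ∀ ε : ℝ, 0 < ε → ∃ N : ℕ, ∀ m ≥ N, ∀ n ≥ N,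
      (∫⁻ z, ENNReal.ofReal (‖f (σ m) z - f (σ n) z‖ ^ p * wt φ z) ∂μ) ≤
        ENNReal.ofReal ε

/-- The measure `ω dA` restricted to the disk. -/
def wMeasure (φ : ℂ → ℝ) : Measure ℂ :=
  (dA.restrict UD).withDensity fun z => ENNReal.ofReal (wt φ z)

/-- The Bergman space `A²(ω)` as a submodule of `L²(ω dA)`. -/
def bergmanSubmodule (φ : ℂ → ℝ) : Submodule ℂ (Lp ℂ 2 (wMeasure φ)) where
  carrier := {f | ∃ g : ℂ → ℂ, DifferentiableOn ℂ g UD ∧ ⇑f =ᵐ[wMeasure φ] g}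
  add_mem' := by
    rintro f₁ f₂ ⟨g₁, hg₁, e₁⟩ ⟨g₂, hg₂, e₂⟩
    exact ⟨g₁ + g₂, hg₁.add hg₂, (Lp.coeFn_add f₁ f₂).trans (e₁.add e₂)⟩
  zero_mem' := ⟨0, differentiableOn_const 0, Lp.coeFn_zero ℂ 2 _⟩
  smul_mem' := by
    rintro c f ⟨g, hg, e⟩
    exact ⟨c • g, hg.const_smul c, (Lp.coeFn_smul c f).trans (e.const_smul c)⟩

/-- The Bergman space `A²(ω)`, as a (pre-)Hilbert space. -/
abbrev BergSp (φ : ℂ → ℝ) := ↥(bergmanSubmodule φ)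

/-- `T` represents the weighted composition operator `uC_{φ₀}` on `A²(ω)`. -/
def RepWComp (φ : ℂ → ℝ) (u φ₀ : ℂ → ℂ) (T : BergSp φ →L[ℂ] BergSp φ) : Prop :=
  ∀ (f : BergSp φ) (g : ℂ → ℂ), DifferentiableOn ℂ g UD →
    ⇑(f : Lp ℂ 2 (wMeasure φ)) =ᵐ[wMeasure φ] g →
    ⇑(T f : Lp ℂ 2 (wMeasure φ)) =ᵐ[wMeasure φ] fun z => u z * g (φ₀ z)

/-- The essential norm of an operator: the distance to the compact operators. -/
def essNorm {H : Type} [NormedAddCommGroup H] [NormedSpace ℂ H] (T : H →L[ℂ] H) : ℝ :=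
  sInf ((fun S : H →L[ℂ] H => ‖T - S‖) '' {S | IsCompactOperator ⇑S})

/-- Membership in the Schatten class `S_p`: `T` admits a singular value decomposition
`T x = ∑ sₙ ⟨x, eₙ⟩ fₙ` with `(sₙ) ∈ ℓ^p`. -/
def MemSchatten (p : ℝ) {H : Type} [NormedAddCommGroup H] [InnerProductSpace ℂ H]
    (T : H →L[ℂ] H) : Prop :=
  ∃ (e f : ℕ → H) (s : ℕ → ℝ), Orthonormal ℂ e ∧ Orthonormal ℂ f ∧ (∀ n, 0 ≤ s n) ∧
    Summable (fun n => s n ^ p) ∧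
    ∀ x : H, T x = ∑' n, (s n : ℂ) • ((inner ℂ (e n) x : ℂ) • f n)

/-- The Toeplitz-type integral operator `T_μ f(z) = ∫ f(ξ) K(z,ξ) ω(ξ) dμ(ξ)`. -/
def toeplitzFun (φ : ℂ → ℝ) (K : ℂ → ℂ → ℂ) (μ : Measure ℂ) (f : ℂ → ℂ) (z : ℂ) : ℂ :=
  ∫ ξ, f ξ * conj (K z ξ) * ((wt φ ξ : ℂ)) ∂μ

/-- `T` represents the Toeplitz operator `T_μ` on `A²(ω)`. -/
def RepToeplitz (φ : ℂ → ℝ) (K : ℂ → ℂ → ℂ) (μ : Measure ℂ)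
    (T : BergSp φ →L[ℂ] BergSp φ) : Prop :=
  ∀ (f : BergSp φ) (g : ℂ → ℂ), DifferentiableOn ℂ g UD →
    ⇑(f : Lp ℂ 2 (wMeasure φ)) =ᵐ[wMeasure φ] g →
    ⇑(T f : Lp ℂ 2 (wMeasure φ)) =ᵐ[wMeasure φ] toeplitzFun φ K μ g

/-- The pullback measure `dμ^{φ₀}_{ω,u} = ω⁻¹ d((|u|²ω dA) ∘ φ₀⁻¹)`. -/
def pullbackM (φ : ℂ → ℝ) (u φ₀ : ℂ → ℂ) : Measure ℂ :=
  (Measure.map φ₀ ((dA.restrict UD).withDensity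
      fun z => ENNReal.ofReal (‖u z‖ ^ 2 * wt φ z))).withDensity
    fun z => ENNReal.ofReal (wt φ z)⁻¹

/-- The square of the operator norm of `uC_{φ₀}` on `A²(ω)`, as a supremum of ratios. -/
def wcompNormSq (φ : ℂ → ℝ) (u φ₀ : ℂ → ℂ) : ℝ≥0∞ :=
  ⨆ f : {f : ℂ → ℂ // DifferentiableOn ℂ f UD},
    apInt 2 φ (fun z => u z * f.1 (φ₀ z)) / apInt 2 φ f.1

/-- `M_{φ₀}(r) = sup_θ |φ₀(r e^{iθ})|`. -/
def Mrad (φ₀ : ℂ → ℂ) (r : ℝ) : ℝ :=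
  ⨆ θ : ℝ, ‖φ₀ ((r : ℂ) * Complex.exp ((θ : ℂ) * Complex.I))‖

/-- `φ` is subharmonic on the disk: upper semicontinuous and satisfying the sub-mean
value inequality on circles. -/
def SubharmonicOnD (φ : ℂ → ℝ) : Prop :=
  UpperSemicontinuousOn φ UD ∧
  ∀ z ∈ UD, ∀ r : ℝ, 0 < r → Metric.closedBall z r ⊆ UD →
    φ z ≤ (1 / (2 * Real.pi)) *
      ∫ θ in (0 : ℝ)..(2 * Real.pi), φ (z + (r : ℂ) * Complex.exp ((θ : ℂ) * Complex.I))

end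

/-!
For a radial `φ` the Laplacian on a radius is `(r φ')'/r`, so `Δφ ≥ 0` makes `φ` increase and
`ω` decrease with `|z|`. If `1 < δ < d_{φ₀}(ζ)`, then near `ζ` we have
`|φ₀ z| ≤ 1 - δ t` with `t = 1 - |z| → 0⁺`, hence `ω(z)/ω(φ₀ z) ≤ ω(1 - t)/ω(1 - δt)`, which tends
to `0` by regularity of `ω` applied with `δ⁻¹` at the point `δt`.
-/

lemma mem_UD_iff {z : ℂ} : z ∈ UD ↔ ‖z‖ < 1 := mem_ball_zero_iff

lemma hasDerivAt_sqrt_sq_add_sq {r : ℝ} (hr : r ≠ 0) (t : ℝ) :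
    HasDerivAt (fun t : ℝ => √(r ^ 2 + t ^ 2)) (t / √(r ^ 2 + t ^ 2)) t := by
  have hpos : 0 < r ^ 2 + t ^ 2 := by positivity
  convert ((hasDerivAt_pow 2 t).const_add (r ^ 2)).sqrt hpos.ne' using 1
  field_simp
  ring

/-- `t ↦ g(√(r² + t²))` is the radial function `g(|z|)` on the vertical line through `r`. -/
lemma deriv_deriv_comp_sqrt_sq_add_sq {g : ℝ → ℝ} {r : ℝ} (hr : 0 < r)
    (hg : ∀ᶠ s in 𝓝 r, DifferentiableAt ℝ g s) (hg' : DifferentiableAt ℝ (deriv g) r) :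
    deriv (deriv fun t : ℝ => g √(r ^ 2 + t ^ 2)) 0 = deriv g r / r := by
  set ψ : ℝ → ℝ := fun t => √(r ^ 2 + t ^ 2)
  have hψ0 : ψ 0 = r := by simp [ψ, Real.sqrt_sq hr.le]
  have hψ' : ∀ t, HasDerivAt ψ (t / ψ t) t := hasDerivAt_sqrt_sq_add_sq hr.ne'
  have hψr : Tendsto ψ (𝓝 0) (𝓝 r) := hψ0 ▸ (hψ' 0).continuousAt.tendsto
  have hderiv : deriv (fun t => g (ψ t)) =ᶠ[𝓝 0] fun t => deriv g (ψ t) * (t / ψ t) := by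
    filter_upwards [hψr.eventually hg] with t ht
    exact (ht.hasDerivAt.comp t (hψ' t)).deriv
  have hg'0 : HasDerivAt (deriv g) (deriv (deriv g) r) (ψ 0) := by
    rw [hψ0]
    exact hg'.hasDerivAt
  have hfirst : HasDerivAt (fun t => deriv g (ψ t)) 0 0 := by
    have h := hg'0.comp 0 (hψ' 0)
    rwa [zero_div, mul_zero] at h
  have hsecond : HasDerivAt (fun t => t / ψ t) (1 / r) 0 := by
    refine ((hasDerivAt_id' 0).div (hψ' 0) (hψ0 ▸ hr.ne')).congr_deriv ?_
    rw [hψ0]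
    field_simp
    ring
  rw [hderiv.deriv_eq, (hfirst.fun_mul hsecond).deriv, hψ0]
  ring

lemma lap_ofReal_of_radial {φ : ℂ → ℝ} (hrad : ∀ z ∈ UD, φ z = φ (‖z‖ : ℂ)) {r : ℝ}
    (hr : 0 < r) (hr1 : r < 1) (hd : ∀ᶠ s in 𝓝 r, DifferentiableAt ℝ (fun s : ℝ => φ s) s)
    (hd' : DifferentiableAt ℝ (deriv fun s : ℝ => φ s) r) :
    lap φ r = deriv (deriv fun s : ℝ => φ s) r + deriv (fun s : ℝ => φ s) r / r := by
  have hhor : iteratedDeriv 2 (fun t : ℝ => φ (r + t)) 0 = deriv (deriv fun s : ℝ => φ s) r := by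
    simp only [← Complex.ofReal_add]
    rw [iteratedDeriv_comp_const_add 2 (fun s : ℝ => φ s) r, iteratedDeriv_succ, iteratedDeriv_one]
    simp only [add_zero]
  have hline : Tendsto (fun t : ℝ => (r : ℂ) + t * Complex.I) (𝓝 0) (𝓝 r) := by
    simpa using (Continuous.tendsto (by fun_prop) 0 :
      Tendsto (fun t : ℝ => (r : ℂ) + t * Complex.I) (𝓝 0) (𝓝 (r + (0 : ℝ) * Complex.I)))
  have hvert : (fun t : ℝ => φ (r + t * Complex.I)) =ᶠ[𝓝 0]
      fun t : ℝ => φ ((√(r ^ 2 + t ^ 2) : ℝ) : ℂ) := by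
    have hrUD : (r : ℂ) ∈ UD := by simpa [mem_UD_iff, abs_of_pos hr] using hr1
    filter_upwards [hline.eventually (Metric.isOpen_ball.mem_nhds hrUD)] with t ht
    rw [hrad _ ht, Complex.norm_add_mul_I]
  rw [lap, hhor, iteratedDeriv_succ, iteratedDeriv_one, hvert.deriv.deriv_eq,
    deriv_deriv_comp_sqrt_sq_add_sq hr hd hd']

/-- The radial part `g'' + g'/r` of the Laplacian is `(r g')'/r`, so when it is nonnegative
`r g'` increases from its value `0` at `r = 0`. -/
lemma monotoneOn_of_deriv_deriv_add_div_nonneg {g : ℝ → ℝ} {U : Set ℝ} {a : ℝ} (hU : IsOpen U)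
    (hsub : Ico 0 a ⊆ U) (hg : ContDiffOn ℝ 2 g U)
    (h : ∀ r ∈ Ioo 0 a, 0 ≤ deriv (deriv g) r + deriv g r / r) : MonotoneOn g (Ico 0 a) := by
  have hg' : ContDiffOn ℝ 1 (deriv g) U := hg.deriv_of_isOpen hU (by norm_num)
  have hgd : ∀ x ∈ U, HasDerivAt g (deriv g x) x := fun x hx =>
    ((hg.differentiableOn two_ne_zero).differentiableAt (hU.mem_nhds hx)).hasDerivAt
  have hgdd : ∀ x ∈ U, HasDerivAt (deriv g) (deriv (deriv g) x) x := fun x hx =>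
    ((hg'.differentiableOn one_ne_zero).differentiableAt (hU.mem_nhds hx)).hasDerivAt
  have hinterior : interior (Ico 0 a) ⊆ U := interior_subset.trans hsub
  rw [interior_Ico] at hinterior
  have hmono_mul : MonotoneOn (fun r => r * deriv g r) (Ico 0 a) := by
    refine monotoneOn_of_hasDerivWithinAt_nonneg (convex_Ico 0 a)
      (continuousOn_id.mul (hg'.continuousOn.mono hsub))
      (f' := fun r => 1 * deriv g r + r * deriv (deriv g) r) (fun x hx => ?_) fun x hx => ?_
    · rw [interior_Ico] at hx
      exact ((hasDerivAt_id x).mul (hgdd x (hinterior hx))).hasDerivWithinAt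
    · rw [interior_Ico] at hx
      have hx0 : x ≠ 0 := hx.1.ne'
      calc (0 : ℝ) ≤ x * (deriv (deriv g) x + deriv g x / x) := mul_nonneg hx.1.le (h x hx)
        _ = 1 * deriv g x + x * deriv (deriv g) x := by field_simp; ring
  have hderiv_nonneg : ∀ x ∈ Ioo 0 a, 0 ≤ deriv g x := by
    intro x hx
    have h0x := hmono_mul ⟨le_rfl, hx.1.trans hx.2⟩ (Ioo_subset_Ico_self hx) hx.1.le
    simp only [zero_mul] at h0x
    exact nonneg_of_mul_nonneg_right h0x hx.1
  refine monotoneOn_of_deriv_nonneg (convex_Ico 0 a)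
    (fun x hx => (hgd x (hsub hx)).continuousAt.continuousWithinAt) ?_ (by rwa [interior_Ico])
  rw [interior_Ico]
  exact fun x hx => (hgd x (hinterior hx)).differentiableAt.differentiableWithinAt

lemma monotoneOn_ofReal_of_radial {φ : ℂ → ℝ} (hsm : ContDiffOn ℝ 2 φ UD)
    (hrad : ∀ z ∈ UD, φ z = φ (‖z‖ : ℂ)) (hlap : ∀ z ∈ UD, 0 ≤ lap φ z) :
    MonotoneOn (fun r : ℝ => φ r) (Ico 0 1) := by
  have hmaps : MapsTo (fun r : ℝ => (r : ℂ)) (Ioo (-1) 1) UD := fun r hr => by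
    simpa [mem_UD_iff, abs_lt] using hr
  have hg : ContDiffOn ℝ 2 (fun r : ℝ => φ r) (Ioo (-1) 1) :=
    hsm.comp Complex.ofRealCLM.contDiff.contDiffOn hmaps
  have hg' : ContDiffOn ℝ 1 (deriv fun r : ℝ => φ r) (Ioo (-1) 1) :=
    hg.deriv_of_isOpen isOpen_Ioo (by norm_num)
  refine monotoneOn_of_deriv_deriv_add_div_nonneg isOpen_Ioo
    (Ico_subset_Ioo_left (by norm_num)) hg fun r hr => ?_
  have hrI : r ∈ Ioo (-1 : ℝ) 1 := ⟨by linarith [hr.1], hr.2⟩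
  have hd : ∀ᶠ s in 𝓝 r, DifferentiableAt ℝ (fun s : ℝ => φ s) s := by
    filter_upwards [isOpen_Ioo.mem_nhds hrI] with s hs
    exact (hg.differentiableOn two_ne_zero).differentiableAt (isOpen_Ioo.mem_nhds hs)
  rw [← lap_ofReal_of_radial hrad hr.1 hr.2 hd
    ((hg'.differentiableOn one_ne_zero).differentiableAt (isOpen_Ioo.mem_nhds hrI))]
  exact hlap _ (hmaps hrI)

lemma antitoneOn_wtR {φ : ℂ → ℝ} (hsm : ContDiffOn ℝ 2 φ UD)
    (hrad : ∀ z ∈ UD, φ z = φ (‖z‖ : ℂ)) (hlap : ∀ z ∈ UD, 0 ≤ lap φ z) :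
    AntitoneOn (wtR φ) (Ico 0 1) := fun _ hr _ hs hrs =>
  Real.exp_le_exp.mpr (neg_le_neg (monotoneOn_ofReal_of_radial hsm hrad hlap hr hs hrs))

lemma wt_eq_wtR_norm {φ : ℂ → ℝ} (hrad : ∀ z ∈ UD, φ z = φ (‖z‖ : ℂ)) {z : ℂ} (hz : z ∈ UD) :
    wt φ z = wtR φ ‖z‖ := by
  rw [wtR, wt, wt, hrad z hz]

lemma IsRegularWt.tendsto_div_one_sub_mul {φ : ℂ → ℝ} (hreg : IsRegularWt φ) {δ : ℝ}
    (hδ : 1 < δ) : Tendsto (fun t => wtR φ (1 - t) / wtR φ (1 - δ * t)) (𝓝[>] 0) (𝓝 0) := by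
  have hδ0 : 0 < δ := one_pos.trans hδ
  have hscale : Tendsto (δ * ·) (𝓝[>] (0 : ℝ)) (𝓝[>] 0) := by
    simpa only [comap_mulLeft_nhdsGT_zero hδ0] using
      tendsto_comap (f := (δ * ·)) (x := 𝓝[>] (0 : ℝ))
  refine ((hreg δ⁻¹ (inv_pos.2 hδ0) (inv_lt_one_of_one_lt₀ hδ)).comp hscale).congr fun t => ?_
  simp [inv_mul_cancel_left₀ hδ0.ne']

lemma eventually_mul_one_sub_norm_lt_of_lt_angD {φ₀ : ℂ → ℂ} {ζ : ℂ} {δ : ℝ}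
    (hδ : ENNReal.ofReal δ < angD φ₀ ζ) : ∀ᶠ z in 𝓝[UD] ζ, δ * (1 - ‖z‖) < 1 - ‖φ₀ z‖ := by
  filter_upwards [eventually_lt_of_lt_liminf hδ, self_mem_nhdsWithin] with z hz hzUD
  rw [← lt_div_iff₀ (sub_pos.2 (mem_UD_iff.1 hzUD))]
  exact (ENNReal.ofReal_lt_ofReal_iff'.1 hz).1

lemma tendsto_one_sub_norm_nhdsWithin_UD {ζ : ℂ} (hζ : ‖ζ‖ = 1) :
    Tendsto (fun z => 1 - ‖z‖) (𝓝[UD] ζ) (𝓝[>] 0) := by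
  refine tendsto_nhdsWithin_iff.2 ⟨?_, ?_⟩
  · have h := (tendsto_const_nhds (x := (1 : ℝ))).sub (continuous_norm.tendsto ζ)
    rw [hζ, sub_self] at h
    exact h.mono_left nhdsWithin_le_nhds
  · filter_upwards [self_mem_nhdsWithin] with z hz using sub_pos.2 (mem_UD_iff.1 hz)

theorem stmt2 (φ : ℂ → ℝ) (φ₀ : ℂ → ℂ) (hω : IsWeightW φ) (hreg : IsRegularWt φ)
    (hφ₀ : IsSelfMapD φ₀) (ζ : ℂ) (hζ : ‖ζ‖ = 1) (hd : 1 < angD φ₀ ζ) :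
    Filter.Tendsto (fun z => wt φ z / wt φ (φ₀ z)) (nhdsWithin ζ UD) (nhds 0) := by
  obtain ⟨c, hc, hlap⟩ := hω.lap_lb
  have hanti := antitoneOn_wtR hω.smooth hω.radial fun z hz => hc.le.trans (hlap z hz)
  obtain ⟨δ, -, hδ1, hδd⟩ := ENNReal.lt_iff_exists_real_btwn.mp hd
  have hδ : 1 < δ := ENNReal.one_lt_ofReal.mp hδ1
  have ht := tendsto_one_sub_norm_nhdsWithin_UD hζ
  refine squeeze_zero' (.of_forall fun z => div_nonneg (Real.exp_pos _).le (Real.exp_pos _).le)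
    ?_ ((hreg.tendsto_div_one_sub_mul hδ).comp ht)
  filter_upwards [eventually_mul_one_sub_norm_lt_of_lt_angD hδd, self_mem_nhdsWithin,
    ht.eventually self_mem_nhdsWithin] with z hzd hz ht0
  have hφz : φ₀ z ∈ UD := hφ₀.2 hz
  have hδt : 0 < δ * (1 - ‖z‖) := mul_pos (one_pos.trans hδ) ht0
  have hle : wtR φ (1 - δ * (1 - ‖z‖)) ≤ wt φ (φ₀ z) := by
    rw [wt_eq_wtR_norm hω.radial hφz]
    exact hanti ⟨norm_nonneg _, mem_UD_iff.1 hφz⟩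
      ⟨by linarith [norm_nonneg (φ₀ z)], by linarith⟩ (by linarith)
  rw [Function.comp_apply, sub_sub_cancel, ← wt_eq_wtR_norm hω.radial hz]
  exact div_le_div_of_nonneg_left (Real.exp_pos _).le (Real.exp_pos _) hle
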